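/- Suppose claims X_n are i.i.d. nonnegative with cdf V, there exists R > 0 with E[e^{R X₁}] = e^{Rc}, and ξ = sup_{y ≥ c} e^{Ry}V̄(y)/∫_y^∞ e^{Rz} dV(z). For the surplus process U_n = U_{n−1}(1+i) + c − X_n with constant interest i ≥ 0, the finite-time ruin probabilities satisfy Ψ_n(u) ≤ ξ e^{−Ru(1+i)} for all n ≥ 1 and u ≥ 0. -/

import Mathlib

/-!
Condition on the first claim `X₁ = a` and put `y = u(1+i) + c`. Either `a > y` and ruin is
immediate, or the process restarts from capital `y - a ≥ 0` with `n` periods left, where by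
induction the ruin probability is at most `ξ e^{-R(y-a)(1+i)} ≤ ξ e^{-Ry} e^{Ra}`. The definition
of `ξ` is exactly what bounds the first case: `P(X₁ > y) ≤ ξ e^{-Ry} E[e^{RX₁}; X₁ > y]`. Adding
up, `Ψ_{n+1}(u) ≤ ξ e^{-Ry} E[e^{RX₁}] = ξ e^{-Ry} e^{Rc} = ξ e^{-Ru(1+i)}`.
-/

open MeasureTheory Real ProbabilityTheory Set
open scoped ENNReal

namespace Lundberg

section Surplus

variable (i c : ℝ)

/-- `x j` is the claim of period `j + 1`. -/
def surplus (x : ℕ → ℝ) (u : ℝ) : ℕ → ℝ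
  | 0 => u
  | k + 1 => surplus x u k * (1 + i) + c - x k

lemma surplus_succ_eq_surplus_shift (x : ℕ → ℝ) (u : ℝ) (k : ℕ) :
    surplus i c x u (k + 1) = surplus i c (fun j => x (j + 1)) (u * (1 + i) + c - x 0) k := by
  induction k with
  | zero => rfl
  | succ k ih => rw [surplus, ih]; rfl

def ruinSet : (n : ℕ) → Set (ℝ × (Fin n → ℝ))
  | 0 => ∅
  | n + 1 => {p | p.1 * (1 + i) + c - p.2 0 < 0 ∨
      (p.1 * (1 + i) + c - p.2 0, Fin.tail p.2) ∈ ruinSet n}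

lemma measurableSet_ruinSet : ∀ n, MeasurableSet (ruinSet i c n)
  | 0 => .empty
  | n + 1 => by
    have hstep : Measurable fun p : ℝ × (Fin (n + 1) → ℝ) => p.1 * (1 + i) + c - p.2 0 := by
      fun_prop
    have htail : Measurable fun p : ℝ × (Fin (n + 1) → ℝ) => Fin.tail p.2 :=
      measurable_pi_lambda _ fun k => (measurable_pi_apply k.succ).comp measurable_snd
    exact (measurableSet_lt hstep measurable_const).union
      ((measurableSet_ruinSet n).preimage (hstep.prodMk htail))

lemma mk_mem_ruinSet_iff (n : ℕ) (x : ℕ → ℝ) (u : ℝ) :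
    (u, fun k : Fin n => x k) ∈ ruinSet i c n ↔ ∃ k, 1 ≤ k ∧ k ≤ n ∧ surplus i c x u k < 0 := by
  induction n generalizing x u with
  | zero => simp only [ruinSet, mem_empty_iff_false, false_iff]; omega
  | succ n ih =>
    refine (or_congr_right (ih (fun j => x (j + 1)) _)).trans ?_
    constructor
    · rintro (h | ⟨k, hk1, hkn, hk⟩)
      · exact ⟨1, le_rfl, by omega, h⟩
      · exact ⟨k + 1, by omega, by omega, by rwa [surplus_succ_eq_surplus_shift]⟩
    · rintro ⟨_ | _ | k, hk1, hkn, hk⟩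
      · omega
      · exact .inl hk
      · exact .inr ⟨k + 1, by omega, by omega, by rwa [surplus_succ_eq_surplus_shift] at hk⟩

end Surplus

lemma lintegral_le_ofReal_mul_integral {α : Type*} [MeasurableSpace α] {μ : Measure α}
    [IsFiniteMeasure μ] {s : Set α} (hs : MeasurableSet s) {f : α → ℝ} (hf : Integrable f μ)
    (hf0 : 0 ≤ f) {C : ℝ} (hC : 0 ≤ C) (hcompl : μ.real sᶜ ≤ C * ∫ a in sᶜ, f a ∂μ)
    {g : α → ℝ≥0∞} (hg_mem : ∀ a ∈ s, g a ≤ ENNReal.ofReal (C * f a))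
    (hg_compl : ∀ a ∈ sᶜ, g a ≤ 1) :
    ∫⁻ a, g a ∂μ ≤ ENNReal.ofReal (C * ∫ a, f a ∂μ) := by
  have hint_s : ∫⁻ a in s, g a ∂μ ≤ ENNReal.ofReal (C * ∫ a in s, f a ∂μ) := by
    rw [← integral_const_mul, ofReal_integral_eq_lintegral_ofReal (hf.restrict.const_mul C)
      (.of_forall fun a => mul_nonneg hC (hf0 a))]
    exact setLIntegral_mono' hs hg_mem
  have hint_compl : ∫⁻ a in sᶜ, g a ∂μ ≤ ENNReal.ofReal (C * ∫ a in sᶜ, f a ∂μ) :=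
    calc ∫⁻ a in sᶜ, g a ∂μ ≤ ∫⁻ _ in sᶜ, 1 ∂μ := setLIntegral_mono' hs.compl hg_compl
      _ = ENNReal.ofReal (μ.real sᶜ) := by rw [setLIntegral_one, ofReal_measureReal]
      _ ≤ _ := ENNReal.ofReal_le_ofReal hcompl
  have hnonneg : ∀ t, 0 ≤ C * ∫ a in t, f a ∂μ := fun t =>
    mul_nonneg hC (integral_nonneg hf0)
  calc ∫⁻ a, g a ∂μ = ∫⁻ a in s, g a ∂μ + ∫⁻ a in sᶜ, g a ∂μ := (lintegral_add_compl g hs).symm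
    _ ≤ ENNReal.ofReal (C * ∫ a in s, f a ∂μ) + ENNReal.ofReal (C * ∫ a in sᶜ, f a ∂μ) :=
      add_le_add hint_s hint_compl
    _ = ENNReal.ofReal (C * ∫ a, f a ∂μ) := by
      rw [← ENNReal.ofReal_add (hnonneg s) (hnonneg sᶜ), ← mul_add, integral_add_compl hs hf]

lemma exp_mul_measureReal_Ioi_le {μ : Measure ℝ} [IsFiniteMeasure μ] {R : ℝ} (hR : 0 ≤ R)
    (hint : Integrable (fun x => exp (R * x)) μ) (y : ℝ) :
    exp (R * y) * μ.real (Ioi y) ≤ ∫ z in Ioi y, exp (R * z) ∂μ := by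
  calc exp (R * y) * μ.real (Ioi y) = ∫ _ in Ioi y, exp (R * y) ∂μ := by
        rw [setIntegral_const, smul_eq_mul, mul_comm]
    _ ≤ ∫ z in Ioi y, exp (R * z) ∂μ :=
      setIntegral_mono_on (integrableOn_const (measure_ne_top μ _)) hint.integrableOn
        measurableSet_Ioi fun z hz => exp_le_exp.2 (mul_le_mul_of_nonneg_left (le_of_lt hz) hR)

lemma measureReal_Ioi_le_of_mem_upperBounds {μ : Measure ℝ} [IsFiniteMeasure μ] {R c ξ : ℝ}
    (hR : 0 ≤ R) (hint : Integrable (fun x => exp (R * x)) μ)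
    (hξ : ξ ∈ upperBounds {r : ℝ | ∃ y : ℝ, c ≤ y ∧
      r = exp (R * y) * (μ (Ioi y)).toReal / ∫ z in Ioi y, exp (R * z) ∂μ})
    {y : ℝ} (hy : c ≤ y) :
    μ.real (Ioi y) ≤ ξ * exp (-(R * y)) * ∫ z in Ioi y, exp (R * z) ∂μ := by
  have hmarkov := exp_mul_measureReal_Ioi_le hR hint y
  have hexp : exp (-(R * y)) * exp (R * y) = 1 := by rw [← exp_add, neg_add_cancel, exp_zero]
  rcases (setIntegral_nonneg measurableSet_Ioi fun z _ => (exp_pos (R * z)).le).eq_or_lt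
    with hzero | hpos
  · rw [← hzero] at hmarkov ⊢
    nlinarith [exp_pos (R * y), measureReal_nonneg (μ := μ) (s := Ioi y)]
  · have hratio := (div_le_iff₀ hpos).1 (hξ ⟨y, hy, rfl⟩)
    calc μ.real (Ioi y) = exp (-(R * y)) * (exp (R * y) * μ.real (Ioi y)) := by
          rw [← mul_assoc, hexp, one_mul]
      _ ≤ exp (-(R * y)) * (ξ * ∫ z in Ioi y, exp (R * z) ∂μ) :=
        mul_le_mul_of_nonneg_left hratio (exp_pos _).le
      _ = ξ * exp (-(R * y)) * ∫ z in Ioi y, exp (R * z) ∂μ := by ring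

section RuinProbability

variable (i c : ℝ) (μ : Measure ℝ)

noncomputable def ruinProb (n : ℕ) (u : ℝ) : ℝ≥0∞ :=
  Measure.pi (fun _ : Fin n => μ) (Prod.mk u ⁻¹' ruinSet i c n)

lemma ruinProb_succ [SigmaFinite μ] (n : ℕ) (u : ℝ) :
    ruinProb i c μ (n + 1) u = ∫⁻ a, Measure.pi (fun _ : Fin n => μ)
      {x | u * (1 + i) + c - a < 0 ∨ (u * (1 + i) + c - a, x) ∈ ruinSet i c n} ∂μ := by
  set T : Set (ℝ × (Fin n → ℝ)) :=
    (fun p => (u * (1 + i) + c - p.1, p.2)) ⁻¹' ({q | q.1 < 0} ∪ ruinSet i c n)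
  have hT : MeasurableSet T :=
    ((measurableSet_lt measurable_fst measurable_const).union
      (measurableSet_ruinSet i c n)).preimage (by fun_prop)
  have hpre : Prod.mk u ⁻¹' ruinSet i c (n + 1) =
      MeasurableEquiv.piFinSuccAbove (fun _ => ℝ) 0 ⁻¹' T := rfl
  rw [ruinProb, hpre, (measurePreserving_piFinSuccAbove (fun _ => μ) 0).measure_preimage
    hT.nullMeasurableSet, Measure.prod_apply hT]
  rfl

lemma ruinProb_le [IsProbabilityMeasure μ] {R ξ : ℝ} (hi : 0 ≤ i) (hR : 0 ≤ R) (hξ : 0 ≤ ξ)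
    (hint : Integrable (fun x => exp (R * x)) μ) (hmgf : ∫ x, exp (R * x) ∂μ = exp (R * c))
    (htail : ∀ y, c ≤ y → μ.real (Ioi y) ≤ ξ * exp (-(R * y)) * ∫ z in Ioi y, exp (R * z) ∂μ)
    (n : ℕ) {u : ℝ} (hu : 0 ≤ u) :
    ruinProb i c μ n u ≤ ENNReal.ofReal (ξ * exp (-R * u * (1 + i))) := by
  induction n generalizing u with
  | zero => simp [ruinProb, ruinSet]
  | succ n ih =>
    set y := u * (1 + i) + c with hy_def
    have hy : c ≤ y := by nlinarith
    have hC : 0 ≤ ξ * exp (-(R * y)) := by positivity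
    rw [ruinProb_succ]
    calc _ ≤ ENNReal.ofReal (ξ * exp (-(R * y)) * ∫ z, exp (R * z) ∂μ) := by
          refine lintegral_le_ofReal_mul_integral measurableSet_Iic hint (fun _ => (exp_pos _).le)
            hC (by simpa only [compl_Iic] using htail y hy) (fun a ha => ?_) fun a _ => prob_le_one
          have hya : 0 ≤ y - a := sub_nonneg.2 ha
          calc _ = ruinProb i c μ n (y - a) := by
                congr 1; ext x; exact or_iff_right (not_lt.2 hya)
            _ ≤ ENNReal.ofReal (ξ * exp (-R * (y - a) * (1 + i))) := ih hya
            _ ≤ ENNReal.ofReal (ξ * exp (-(R * y)) * exp (R * a)) := by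
              rw [mul_assoc ξ, ← exp_add]
              gcongr
              nlinarith [mul_nonneg (mul_nonneg hR hya) hi]
      _ = ENNReal.ofReal (ξ * exp (-R * u * (1 + i))) := by
        rw [hmgf, mul_assoc, ← exp_add, hy_def]
        ring_nf

end RuinProbability

lemma map_shift_eq_pi {Ω β : Type*} [MeasurableSpace Ω] [MeasurableSpace β] {P : Measure Ω}
    {X : ℕ → Ω → β} {μ : Measure β} (hX : ∀ n, Measurable (X n)) (hindep : iIndepFun X P)
    (hlaw : ∀ k, P.map (X (k + 1)) = μ) (n : ℕ) :
    P.map (fun ω (k : Fin n) => X (k + 1) ω) = Measure.pi fun _ => μ := by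
  have hinj : Function.Injective fun k : Fin n => (k : ℕ) + 1 := fun a b h => by
    simpa [Fin.ext_iff] using h
  rw [(hindep.precomp hinj).map_fun_eq_pi_map fun k => (hX _).aemeasurable]
  simp only [hlaw]

end Lundberg

theorem lundberg_bound_finite_time_general
    {Ω : Type*} [MeasureSpace Ω]
    (i c : ℝ) (hi : 0 ≤ i)
    (X : ℕ → Ω → ℝ) (hXmeas : ∀ n, Measurable (X n))
    (μ : Measure ℝ) [IsProbabilityMeasure μ]
    (hiid : ∀ n, 1 ≤ n → Measure.map (X n) ℙ = μ)
    (hindep : iIndepFun X ℙ)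
    (R : ℝ) (hR : 0 < R)
    (hmgf_int : Integrable (fun x => Real.exp (R * x)) μ)
    (hmgf : ∫ x, Real.exp (R * x) ∂μ = Real.exp (R * c))
    (ξ : ℝ) (hξ0 : 0 < ξ)
    (hξ : IsLUB {r : ℝ | ∃ y : ℝ, c ≤ y ∧
      r = Real.exp (R * y) * (μ (Set.Ioi y)).toReal /
        ∫ z in Set.Ioi y, Real.exp (R * z) ∂μ} ξ)
    (U : ℝ → ℕ → Ω → ℝ)
    (hU0 : ∀ u ω, U u 0 ω = u)
    (hUrec : ∀ u n ω, U u (n + 1) ω = U u n ω * (1 + i) + c - X (n + 1) ω)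
    (Ψ : ℕ → ℝ → ℝ)
    (hΨ : ∀ n u, Ψ n u = (ℙ {ω | ∃ k, 1 ≤ k ∧ k ≤ n ∧ U u k ω < 0}).toReal) :
    ∀ n : ℕ, 1 ≤ n → ∀ u : ℝ, 0 ≤ u →
      Ψ n u ≤ ξ * Real.exp (-R * u * (1 + i)) := by
  intro n _ u hu
  have hU : ∀ ω k, U u k ω = Lundberg.surplus i c (fun j => X (j + 1) ω) u k := fun ω k => by
    induction k with
    | zero => exact hU0 u ω
    | succ k ih => rw [hUrec, ih]; rfl
  have hevent : {ω | ∃ k, 1 ≤ k ∧ k ≤ n ∧ U u k ω < 0} =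
      (fun ω (k : Fin n) => X (k + 1) ω) ⁻¹' (Prod.mk u ⁻¹' Lundberg.ruinSet i c n) := by
    ext ω
    simp only [hU]
    exact (Lundberg.mk_mem_ruinSet_iff i c n _ u).symm
  have hprob : ℙ {ω | ∃ k, 1 ≤ k ∧ k ≤ n ∧ U u k ω < 0} = Lundberg.ruinProb i c μ n u := by
    rw [hevent, ← Measure.map_apply (by fun_prop)
      ((Lundberg.measurableSet_ruinSet i c n).preimage measurable_prodMk_left),
      Lundberg.map_shift_eq_pi hXmeas hindep fun k => hiid (k + 1) k.succ_pos]
    rfl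
  rw [hΨ, hprob]
  exact ENNReal.toReal_le_of_le_ofReal (by positivity) <|
    Lundberg.ruinProb_le i c μ hi hR.le hξ0.le hmgf_int hmgf
      (fun y hy => Lundberg.measureReal_Ioi_le_of_mem_upperBounds hR.le hmgf_int hξ.1 hy) n hu

/-- Lundberg upper bound for the finite-time ruin probabilities of the surplus process
`U_n = U_{n-1}(1+i) + c - X_n` with i.i.d. nonnegative claims of distribution `μ`,
adjustment coefficient `R` with `E[e^{RX₁}] = e^{Rc}` and
`ξ = sup_{y ≥ c} e^{Ry} V̄(y) / ∫_y^∞ e^{Rz} dV(z)`: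
`Ψ_n(u) ≤ ξ e^{-Ru(1+i)}` for all `n ≥ 1` and `u ≥ 0`. -/
theorem lundberg_bound_finite_time
    {Ω : Type*} [MeasureSpace Ω] [IsProbabilityMeasure (ℙ : Measure Ω)]
    (i c : ℝ) (hi : 0 ≤ i) (hc : 0 < c)
    (X : ℕ → Ω → ℝ) (hXmeas : ∀ n, Measurable (X n))
    (hXpos : ∀ n, 1 ≤ n → ∀ ω, 0 ≤ X n ω)
    (μ : Measure ℝ) [IsProbabilityMeasure μ]
    (hiid : ∀ n, 1 ≤ n → Measure.map (X n) ℙ = μ)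
    (hindep : iIndepFun X ℙ)
    (hmean : ∫ x, x ∂μ < c)
    (R : ℝ) (hR : 0 < R)
    (hmgf_int : Integrable (fun x => Real.exp (R * x)) μ)
    (hmgf : ∫ x, Real.exp (R * x) ∂μ = Real.exp (R * c))
    (ξ : ℝ) (hξ0 : 0 < ξ) (hξ1 : ξ ≤ 1)
    (hξ : IsLUB {r : ℝ | ∃ y : ℝ, c ≤ y ∧
      r = Real.exp (R * y) * (μ (Set.Ioi y)).toReal /
        ∫ z in Set.Ioi y, Real.exp (R * z) ∂μ} ξ)
    (U : ℝ → ℕ → Ω → ℝ)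
    (hU0 : ∀ u ω, U u 0 ω = u)
    (hUrec : ∀ u n ω, U u (n + 1) ω = U u n ω * (1 + i) + c - X (n + 1) ω)
    (Ψ : ℕ → ℝ → ℝ)
    (hΨ : ∀ n u, Ψ n u = (ℙ {ω | ∃ k, 1 ≤ k ∧ k ≤ n ∧ U u k ω < 0}).toReal) :
    ∀ n : ℕ, 1 ≤ n → ∀ u : ℝ, 0 ≤ u →
      Ψ n u ≤ ξ * Real.exp (-R * u * (1 + i)) :=
  lundberg_bound_finite_time_general i c hi X hXmeas μ hiid hindep R hR hmgf_int hmgf ξ hξ0 hξ U hU0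
    hUrec Ψ hΨ
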